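/- Suppose the gains k1, k2 ∈ ℝ satisfy 1 − k1·b2 ≠ 0, where b2 = q(le). Then there exist positive constants γ3, β3, δ3, θ3 and δ such that for every classical solution (l, f) of the normalized closed-loop extrusion model on [0,∞) with f of class C³ on [0,∞)×[0,1], and every time t ≥ 0 at which |l(t) − le| + |N(t) − Ne| + |f(t,1) − fpe| ≤ δ, the quantity V3(t) := ∫₀¹ e^{−γ3·x}·(∂ₓ²f(t,x))² dx is differentiable and satisfies V3'(t) ≤ −β3·V3(t) − δ3·(∂ₓ²f(t,1))² + θ3·((l(t) − le)² + (f(t,1) − fpe)² + (∂ₓf(t,1))²). -/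

import Mathlib

/-!
Write `w = ∂ₓ²f`. Differentiating the transport equation twice in `x` gives
`∂ₜw + α ∂ₓw = 2 (l'/l) w`, so after an integration by parts against the weight `e^{-x}`,
`V3' = α(0) w(t,0)² - e^{-1} α(1) w(t,1)² - ∫₀¹ (α - 3 l'/l) e^{-x} w² dx`.
Near equilibrium `α` is bounded below by a positive constant and `l'` is small, which yields the
terms `-β3 V3` and `-δ3 w(t,1)²`. The inflow value `w(t,0)` is controlled through the closed
loop: near equilibrium `N`, `f(·,0)` and `l'` are smooth functions of `z = (l, f(·,1))`, and
differentiating the boundary condition twice in time expresses `w(t,0)` as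
`W₀(z) + W₁(z) ∂ₓf(t,1)` with `W₀` of class `C¹` and vanishing at equilibrium, so
`|w(t,0)| ≤ K (|l - le| + |f(t,1) - fpe|) + M |∂ₓf(t,1)|`.
-/

/-- Pressure coefficient `q(l) = η·ρ0·Veff·(L − l)/(B·ρ0 + Kd·(L − l))` of the isothermal
extrusion model. -/
noncomputable def qfun (η ρ0 Veff L B Kd : ℝ) (l : ℝ) : ℝ :=
  η * ρ0 * Veff * (L - l) / (B * ρ0 + Kd * (L - l))

open Set Filter Topology Real

section PartialDerivatives

variable {E : Type*} [NormedAddCommGroup E] [NormedSpace ℝ E] {g : ℝ × ℝ → E}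

noncomputable def partialFst (g : ℝ × ℝ → E) (p : ℝ × ℝ) : E := fderiv ℝ g p (1, 0)

noncomputable def partialSnd (g : ℝ × ℝ → E) (p : ℝ × ℝ) : E := fderiv ℝ g p (0, 1)

theorem hasDerivAt_partialFst {t x : ℝ} (hg : DifferentiableAt ℝ g (t, x)) :
    HasDerivAt (fun s => g (s, x)) (partialFst g (t, x)) t := by
  simpa [partialFst, Function.comp_def] using
    hg.hasFDerivAt.comp_hasDerivAt t ((hasDerivAt_id t).prodMk (hasDerivAt_const t x))

theorem hasDerivAt_partialSnd {t x : ℝ} (hg : DifferentiableAt ℝ g (t, x)) :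
    HasDerivAt (fun y => g (t, y)) (partialSnd g (t, x)) x := by
  simpa [partialSnd, Function.comp_def] using
    hg.hasFDerivAt.comp_hasDerivAt x ((hasDerivAt_const x t).prodMk (hasDerivAt_id x))

theorem ContDiff.partialFst {m n : WithTop ℕ∞} (hg : ContDiff ℝ n g) (hmn : m + 1 ≤ n) :
    ContDiff ℝ m (partialFst g) :=
  (hg.fderiv_right hmn).clm_apply contDiff_const

theorem ContDiff.partialSnd {m n : WithTop ℕ∞} (hg : ContDiff ℝ n g) (hmn : m + 1 ≤ n) :
    ContDiff ℝ m (partialSnd g) :=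
  (hg.fderiv_right hmn).clm_apply contDiff_const

theorem fderiv_fderiv_apply {v p : ℝ × ℝ} (hg : DifferentiableAt ℝ (fderiv ℝ g) p) :
    fderiv ℝ (fun q => fderiv ℝ g q v) p = (fderiv ℝ (fderiv ℝ g) p).flip v := by
  simpa using fderiv_clm_apply hg (differentiableAt_const v)

theorem partialFst_partialSnd (hg : ContDiff ℝ 2 g) (p : ℝ × ℝ) :
    partialFst (partialSnd g) p = partialSnd (partialFst g) p := by
  have hg' : DifferentiableAt ℝ (fderiv ℝ g) p :=
    ((hg.fderiv_right (m := 1) le_rfl).differentiable one_ne_zero) p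
  change fderiv ℝ (fun q => fderiv ℝ g q (0, 1)) p (1, 0)
    = fderiv ℝ (fun q => fderiv ℝ g q (1, 0)) p (0, 1)
  simp only [fderiv_fderiv_apply hg', ContinuousLinearMap.flip_apply]
  exact (hg.contDiffAt.isSymmSndFDerivAt (by simp)).eq _ _

theorem partialFst_uncurry {f : ℝ → ℝ → E} {s x : ℝ}
    (hf : DifferentiableAt ℝ (Function.uncurry f) (s, x)) :
    partialFst (Function.uncurry f) (s, x) = deriv (fun σ => f σ x) s :=
  (hasDerivAt_partialFst hf).deriv.symm

theorem partialSnd_uncurry {f : ℝ → ℝ → E} {s x : ℝ}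
    (hf : DifferentiableAt ℝ (Function.uncurry f) (s, x)) :
    partialSnd (Function.uncurry f) (s, x) = deriv (f s) x :=
  (hasDerivAt_partialSnd hf).deriv.symm

theorem partialSnd_partialSnd_uncurry {f : ℝ → ℝ → E} (hf : ContDiff ℝ 2 (Function.uncurry f))
    (s x : ℝ) : partialSnd (partialSnd (Function.uncurry f)) (s, x) = iteratedDeriv 2 (f s) x := by
  have hderiv : deriv (f s) = fun y => partialSnd (Function.uncurry f) (s, y) :=
    funext fun y => (partialSnd_uncurry (hf.differentiable (by norm_num) _)).symm
  rw [iteratedDeriv_succ, iteratedDeriv_one, hderiv]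
  exact ((hasDerivAt_partialSnd
    ((hf.partialSnd (m := 1) le_rfl).differentiable one_ne_zero _)).deriv).symm

end PartialDerivatives

theorem HasDerivAt.eq_of_eventuallyEq_nhdsWithin {𝕜 F : Type*} [NontriviallyNormedField 𝕜]
    [NormedAddCommGroup F] [NormedSpace 𝕜 F] {u v : 𝕜 → F} {u' v' : F} {s : Set 𝕜} {x : 𝕜}
    (hu : HasDerivAt u u' x) (hv : HasDerivAt v v' x) (hs : UniqueDiffWithinAt 𝕜 s x)
    (hx : x ∈ s) (huv : u =ᶠ[𝓝[s] x] v) : u' = v' :=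
  hs.eq_deriv s (hu.hasDerivWithinAt.congr_of_eventuallyEq huv.symm (huv.eq_of_nhdsWithin hx).symm)
    hv.hasDerivWithinAt

theorem hasDerivAt_intervalIntegral_of_continuous {E : Type*} [NormedAddCommGroup E]
    [NormedSpace ℝ E] {G G' : ℝ × ℝ → E} (hG : Continuous G) (hG' : Continuous G')
    (hd : ∀ s x, HasDerivAt (fun s => G (s, x)) (G' (s, x)) s) (a b t : ℝ) :
    HasDerivAt (fun s => ∫ x in a..b, G (s, x)) (∫ x in a..b, G' (t, x)) t := by
  have hcont : ∀ s, Continuous fun x => G (s, x) := fun s => hG.comp (Continuous.prodMk_right s)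
  obtain ⟨C, hC⟩ := (isCompact_closedBall t 1 |>.prod isCompact_uIcc).exists_bound_of_continuousOn
    hG'.continuousOn
  refine (intervalIntegral.hasDerivAt_integral_of_dominated_loc_of_deriv_le
    (bound := fun _ => C) (Metric.ball_mem_nhds t one_pos)
    (Eventually.of_forall fun s => (hcont s).aestronglyMeasurable)
    ((hcont t).intervalIntegrable a b)
    (hG'.comp (Continuous.prodMk_right t)).aestronglyMeasurable ?_ intervalIntegrable_const
    (Eventually.of_forall fun x _ s _ => hd s x)).2
  refine Eventually.of_forall fun x hx s hs => hC (s, x) ⟨Metric.ball_subset_closedBall hs, ?_⟩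
  exact uIoc_subset_uIcc hx

theorem transport_partialSnd {F : ℝ × ℝ → ℝ} {s : Set ℝ} {t a b c : ℝ} (hF : ContDiff ℝ 2 F)
    (hs : UniqueDiffOn ℝ s)
    (hpde : ∀ x ∈ s, partialFst F (t, x) + (a + b * x) * partialSnd F (t, x) = c * F (t, x)) :
    ∀ x ∈ s, partialFst (partialSnd F) (t, x) + (a + b * x) * partialSnd (partialSnd F) (t, x)
      = (c - b) * partialSnd F (t, x) := by
  intro x hx
  have hFt : ContDiff ℝ 1 (partialFst F) := hF.partialFst le_rfl
  have hFx : ContDiff ℝ 1 (partialSnd F) := hF.partialSnd le_rfl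
  have hspeed : HasDerivAt (fun y => a + b * y) b x := by
    simpa using ((hasDerivAt_id x).const_mul b).const_add a
  have hderiv : HasDerivAt
      (fun y => partialFst F (t, y) + (a + b * y) * partialSnd F (t, y) - c * F (t, y))
      (partialSnd (partialFst F) (t, x)
        + (b * partialSnd F (t, x) + (a + b * x) * partialSnd (partialSnd F) (t, x))
        - c * partialSnd F (t, x)) x :=
    ((hasDerivAt_partialSnd (hFt.differentiable one_ne_zero _)).add
      (hspeed.mul (hasDerivAt_partialSnd (hFx.differentiable one_ne_zero _)))).sub
      ((hasDerivAt_partialSnd (hF.differentiable (by norm_num) _)).const_mul c)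
  have hzero := hderiv.eq_of_eventuallyEq_nhdsWithin (hasDerivAt_const x 0) (hs x hx) hx
    (eventually_nhdsWithin_of_forall fun y hy => sub_eq_zero.2 (hpde y hy))
  rw [← partialFst_partialSnd hF] at hzero
  linear_combination hzero

-- With `α x = a + b x`, the integrand is `-(e^{-γx} α w²)' - (γ α + 3 b) e^{-γx} w²`.
theorem integral_exp_mul_transport_eq {w w' : ℝ → ℝ} (hw : ∀ x, HasDerivAt w (w' x) x)
    (hw' : Continuous w') (γ a b : ℝ) :
    ∫ x in (0:ℝ)..1, exp (-γ * x) * (2 * w x * (-2 * b * w x - (a + b * x) * w' x))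
      = a * w 0 ^ 2 - exp (-γ) * (a + b) * w 1 ^ 2
        - ∫ x in (0:ℝ)..1, (γ * (a + b * x) + 3 * b) * (exp (-γ * x) * w x ^ 2) := by
  have hwc : Continuous w := continuous_iff_continuousAt.2 fun x => (hw x).continuousAt
  set Φ' : ℝ → ℝ := fun x => exp (-γ * x) * (-γ) * ((a + b * x) * w x ^ 2)
    + exp (-γ * x) * (b * w x ^ 2 + (a + b * x) * (2 * w x * w' x))
  have hΦ : ∀ x, HasDerivAt (fun x => exp (-γ * x) * ((a + b * x) * w x ^ 2)) (Φ' x) x := by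
    intro x
    have hexp : HasDerivAt (fun x => exp (-γ * x)) (exp (-γ * x) * -γ) x := by
      simpa using ((hasDerivAt_id x).const_mul (-γ)).exp
    have hspeed : HasDerivAt (fun y => a + b * y) b x := by
      simpa using ((hasDerivAt_id x).const_mul b).const_add a
    refine (hexp.fun_mul (hspeed.fun_mul ((hw x).fun_pow 2))).congr_deriv ?_
    simp only [Φ']
    ring
  have hΦ'c : Continuous Φ' := by fun_prop
  have hflux : ∀ x, exp (-γ * x) * (2 * w x * (-2 * b * w x - (a + b * x) * w' x))
      = -Φ' x - (γ * (a + b * x) + 3 * b) * (exp (-γ * x) * w x ^ 2) := by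
    intro x
    simp only [Φ']
    ring
  simp_rw [hflux]
  rw [intervalIntegral.integral_sub (f := fun x => -Φ' x) (hΦ'c.neg.intervalIntegrable 0 1)
      (Continuous.intervalIntegrable (by fun_prop) 0 1),
    intervalIntegral.integral_neg,
    intervalIntegral.integral_eq_sub_of_hasDerivAt (fun x _ => hΦ x) (hΦ'c.intervalIntegrable 0 1)]
  simp
  ring

theorem integral_exp_mul_transport_le {w w' : ℝ → ℝ} (hw : ∀ x, HasDerivAt w (w' x) x)
    (hw' : Continuous w') {γ a b β c A : ℝ} (hc : c ≤ a + b) (hA : a ≤ A)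
    (hβ : ∀ x ∈ Icc (0:ℝ) 1, β ≤ γ * (a + b * x) + 3 * b) :
    ∫ x in (0:ℝ)..1, exp (-γ * x) * (2 * w x * (-2 * b * w x - (a + b * x) * w' x))
      ≤ -β * (∫ x in (0:ℝ)..1, exp (-γ * x) * w x ^ 2) - c * exp (-γ) * w 1 ^ 2
        + A * w 0 ^ 2 := by
  have hwc : Continuous w := continuous_iff_continuousAt.2 fun x => (hw x).continuousAt
  have hbulk : β * ∫ x in (0:ℝ)..1, exp (-γ * x) * w x ^ 2
      ≤ ∫ x in (0:ℝ)..1, (γ * (a + b * x) + 3 * b) * (exp (-γ * x) * w x ^ 2) := by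
    rw [← intervalIntegral.integral_const_mul]
    exact intervalIntegral.integral_mono_on zero_le_one
      (Continuous.intervalIntegrable (by fun_prop) 0 1)
      (Continuous.intervalIntegrable (by fun_prop) 0 1)
      fun x hx => mul_le_mul_of_nonneg_right (hβ x hx) (by positivity)
  have hout : c * exp (-γ) * w 1 ^ 2 ≤ exp (-γ) * (a + b) * w 1 ^ 2 := by
    rw [mul_comm c]
    exact mul_le_mul_of_nonneg_right (mul_le_mul_of_nonneg_left hc (exp_pos _).le) (sq_nonneg _)
  have hin : a * w 0 ^ 2 ≤ A * w 0 ^ 2 := mul_le_mul_of_nonneg_right hA (sq_nonneg _)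
  rw [integral_exp_mul_transport_eq hw hw']
  linarith

theorem exists_hasDerivAt_weightedEnergy_le {F : ℝ × ℝ → ℝ} (hF : ContDiff ℝ 3 F)
    {t γ a b β c A : ℝ}
    (hpde : ∀ x ∈ Icc (0:ℝ) 1, partialFst F (t, x) + (a + b * x) * partialSnd F (t, x) = 0)
    (hc : c ≤ a + b) (hA : a ≤ A) (hβ : ∀ x ∈ Icc (0:ℝ) 1, β ≤ γ * (a + b * x) + 3 * b) :
    ∃ v, HasDerivAt
        (fun s => ∫ x in (0:ℝ)..1, exp (-γ * x) * partialSnd (partialSnd F) (s, x) ^ 2) v t ∧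
      v ≤ -β * (∫ x in (0:ℝ)..1, exp (-γ * x) * partialSnd (partialSnd F) (t, x) ^ 2)
        - c * exp (-γ) * partialSnd (partialSnd F) (t, 1) ^ 2
        + A * partialSnd (partialSnd F) (t, 0) ^ 2 := by
  set w := partialSnd (partialSnd F)
  have hFx : ContDiff ℝ 2 (partialSnd F) := hF.partialSnd le_rfl
  have hw : ContDiff ℝ 1 w := hFx.partialSnd le_rfl
  have hwt : Continuous (partialFst w) := (hw.partialFst le_rfl : ContDiff ℝ 0 _).continuous
  have hwx : Continuous (partialSnd w) := (hw.partialSnd le_rfl : ContDiff ℝ 0 _).continuous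
  have hux : UniqueDiffOn ℝ (Icc (0:ℝ) 1) := uniqueDiffOn_Icc zero_lt_one
  have htransport : ∀ x ∈ Icc (0:ℝ) 1,
      partialFst w (t, x) = -2 * b * w (t, x) - (a + b * x) * partialSnd w (t, x) := by
    intro x hx
    have := transport_partialSnd hFx hux
      (transport_partialSnd (c := 0) (hF.of_le (by norm_num)) hux (by simpa using hpde)) x hx
    linear_combination this
  refine ⟨∫ x in (0:ℝ)..1, exp (-γ * x) * (2 * w (t, x) * partialFst w (t, x)), ?_, ?_⟩
  · refine hasDerivAt_intervalIntegral_of_continuous (G := fun p => exp (-γ * p.2) * w p ^ 2)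
      (G' := fun p => exp (-γ * p.2) * (2 * w p * partialFst w p)) (by fun_prop) ?_ ?_ 0 1 t
    · exact (by fun_prop : Continuous fun p : ℝ × ℝ => exp (-γ * p.2)).mul
        ((continuous_const.mul hw.continuous).mul hwt)
    · intro s x
      refine (((hasDerivAt_partialFst (hw.differentiable one_ne_zero (s, x))).fun_pow 2).const_mul
        (exp (-γ * x))).congr_deriv ?_
      ring
  · rw [intervalIntegral.integral_congr (g := fun x => exp (-γ * x) * (2 * w (t, x)
      * (-2 * b * w (t, x) - (a + b * x) * partialSnd w (t, x)))) fun x hx => by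
        rw [htransport x (by simpa [uIcc_of_le zero_le_one] using hx)]]
    exact integral_exp_mul_transport_le
      (fun x => hasDerivAt_partialSnd (hw.differentiable one_ne_zero _))
      (hwx.comp (Continuous.prodMk_right t)) hc hA hβ

section BoundaryCurvature

-- `n l`, `h l` and `V z` stand for the screw speed, the inlet value `f(·,0)` and the interface
-- speed `l'` as functions of the reduced state `z = (l, f(·,1))`.
variable (ζ : ℝ) (n h : ℝ → ℝ) (V : ℝ × ℝ → ℝ)

noncomputable def boundarySlope (z : ℝ × ℝ) : ℝ :=
  -(deriv h z.1 * V z) * z.1 / (ζ * n z.1)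

noncomputable def curvatureOffset (z : ℝ × ℝ) : ℝ :=
  (V z / z.1 * boundarySlope ζ n h V z - fderiv ℝ (boundarySlope ζ n h V) z (V z, 0))
    / (ζ * n z.1 / z.1)

noncomputable def curvatureGain (z : ℝ × ℝ) : ℝ :=
  fderiv ℝ (boundarySlope ζ n h V) z (0, (ζ * n z.1 - V z) / z.1) / (ζ * n z.1 / z.1)

variable {ζ n h V} {F : ℝ × ℝ → ℝ} {l : ℝ → ℝ}

theorem partialSnd_zero_eq_boundarySlope {s : ℝ} (hs : 0 ≤ s) (hF : DifferentiableAt ℝ F (s, 0))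
    (hh : DifferentiableAt ℝ h (l s)) (hl : HasDerivAt l (V (l s, F (s, 1))) s)
    (hbc : (fun σ => F (σ, 0)) =ᶠ[𝓝[Ici 0] s] fun σ => h (l σ))
    (hpde : partialFst F (s, 0) + ζ * n (l s) / l s * partialSnd F (s, 0) = 0)
    (hn : ζ * n (l s) ≠ 0) (hl0 : l s ≠ 0) :
    partialSnd F (s, 0) = boundarySlope ζ n h V (l s, F (s, 1)) := by
  have hFt : partialFst F (s, 0) = deriv h (l s) * V (l s, F (s, 1)) :=
    (hasDerivAt_partialFst hF).eq_of_eventuallyEq_nhdsWithin (hh.hasDerivAt.comp s hl)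
      (uniqueDiffOn_Ici 0 s hs) hs hbc
  rw [hFt] at hpde
  have hcancel :
      ζ * n (l s) / l s * partialSnd F (s, 0) * l s = ζ * n (l s) * partialSnd F (s, 0) := by
    field_simp
  rw [boundarySlope, eq_div_iff hn]
  linear_combination l s * hpde - hcancel

theorem partialSnd_partialSnd_zero_eq {t : ℝ} (ht : 0 ≤ t) (hF : ContDiff ℝ 2 F)
    (hl : HasDerivAt l (V (l t, F (t, 1))) t)
    (hG : DifferentiableAt ℝ (boundarySlope ζ n h V) (l t, F (t, 1)))
    (hslope : (fun σ => partialSnd F (σ, 0)) =ᶠ[𝓝[Ici 0] t]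
      fun σ => boundarySlope ζ n h V (l σ, F (σ, 1)))
    (hpde : ∀ x ∈ Icc (0:ℝ) 1, partialFst F (t, x)
      + (ζ * n (l t) / l t + -V (l t, F (t, 1)) / l t * x) * partialSnd F (t, x) = 0)
    (hn : ζ * n (l t) ≠ 0) (hl0 : l t ≠ 0) :
    partialSnd (partialSnd F) (t, 0) = curvatureOffset ζ n h V (l t, F (t, 1))
      + curvatureGain ζ n h V (l t, F (t, 1)) * partialSnd F (t, 1) := by
  set z : ℝ × ℝ := (l t, F (t, 1))
  set DG := fderiv ℝ (boundarySlope ζ n h V) z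
  have hF1 : Differentiable ℝ (partialSnd F) := (hF.partialSnd le_rfl).differentiable one_ne_zero
  have hFx0 := transport_partialSnd (c := 0) hF (uniqueDiffOn_Icc zero_lt_one)
    (by simpa using hpde) 0 (left_mem_Icc.2 zero_le_one)
  have hFt1 := hpde 1 (right_mem_Icc.2 zero_le_one)
  have hFtx0 : partialFst (partialSnd F) (t, 0) = DG (V z, partialFst F (t, 1)) := by
    have hz : HasDerivAt (fun σ => (l σ, F (σ, 1))) (V z, partialFst F (t, 1)) t :=
      hl.prodMk (hasDerivAt_partialFst (hF.differentiable (by norm_num) _))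
    have hGz : HasDerivAt (fun σ => boundarySlope ζ n h V (l σ, F (σ, 1)))
        (DG (V z, partialFst F (t, 1))) t := by
      simpa only [Function.comp_def] using hG.hasFDerivAt.comp_hasDerivAt t hz
    exact (hasDerivAt_partialFst (hF1 _)).eq_of_eventuallyEq_nhdsWithin hGz
      (uniqueDiffOn_Ici 0 t ht) ht hslope
  have hsplit : ((V z, partialFst F (t, 1)) : ℝ × ℝ)
      = (V z, 0) - partialSnd F (t, 1) • ((0 : ℝ), (ζ * n z.1 - V z) / z.1) := by
    ext
    · simp
    · simp only [Prod.snd_sub, Prod.smul_snd, smul_eq_mul]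
      field_simp
      linear_combination hFt1
  rw [hFtx0, hsplit, map_sub, map_smul, smul_eq_mul, hslope.eq_of_nhdsWithin ht] at hFx0
  have ha : ζ * n z.1 / z.1 ≠ 0 := div_ne_zero hn hl0
  have hsolve : partialSnd (partialSnd F) (t, 0) = (V z / z.1 * boundarySlope ζ n h V z
      - DG (V z, 0) + DG (0, (ζ * n z.1 - V z) / z.1) * partialSnd F (t, 1))
        / (ζ * n z.1 / z.1) := by
    rw [eq_div_iff ha]
    linear_combination hFx0
  rw [hsolve, curvatureOffset, curvatureGain]
  ring

theorem ContDiffAt.boundarySlope {z : ℝ × ℝ} {m : WithTop ℕ∞} (hn : ContDiffAt ℝ m n z.1)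
    (hh : ContDiffAt ℝ (m + 1) h z.1) (hV : ContDiffAt ℝ m V z) (hnz : ζ * n z.1 ≠ 0) :
    ContDiffAt ℝ m (boundarySlope ζ n h V) z := by
  have hh' : ContDiffAt ℝ m (deriv h) z.1 := (hh.fderiv_right le_rfl).clm_apply contDiffAt_const
  exact ((((hh'.comp z contDiffAt_fst).mul hV).neg).mul contDiffAt_fst).div
    (contDiffAt_const.mul (hn.comp z contDiffAt_fst)) hnz

theorem exists_curvature_bounds {ze : ℝ × ℝ} (hnz : ζ * n ze.1 ≠ 0) (hze : ze.1 ≠ 0)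
    (hn : ContDiffAt ℝ 2 n ze.1) (hh : ContDiffAt ℝ 3 h ze.1) (hV : ContDiffAt ℝ 2 V ze)
    (hV0 : V ze = 0) :
    ∃ K M : ℝ, 0 ≤ K ∧ ∀ᶠ z in 𝓝 ze,
      |curvatureOffset ζ n h V z| ≤ K * dist z ze ∧ |curvatureGain ζ n h V z| ≤ M := by
  have hDG : ContDiffAt ℝ 1 (fderiv ℝ (boundarySlope ζ n h V)) ze :=
    (ContDiffAt.boundarySlope hn hh hV hnz).fderiv_right le_rfl
  have hn1 : ContDiffAt ℝ 1 (fun z : ℝ × ℝ => n z.1) ze :=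
    (hn.comp ze contDiffAt_fst).of_le (by norm_num)
  have hV1 : ContDiffAt ℝ 1 V ze := hV.of_le (by norm_num)
  have hG1 : ContDiffAt ℝ 1 (boundarySlope ζ n h V) ze :=
    ContDiffAt.boundarySlope (hn.of_le (by norm_num)) (hh.of_le (by norm_num)) hV1 hnz
  have hα : ContDiffAt ℝ 1 (fun z : ℝ × ℝ => ζ * n z.1 / z.1) ze :=
    (contDiffAt_const.mul hn1).div contDiffAt_fst hze
  have hα0 : ζ * n ze.1 / ze.1 ≠ 0 := div_ne_zero hnz hze
  have hW0 : ContDiffAt ℝ 1 (curvatureOffset ζ n h V) ze :=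
    (((hV1.div contDiffAt_fst hze).mul hG1).sub
      (hDG.clm_apply (hV1.prodMk contDiffAt_const))).div hα hα0
  have hW1 : ContDiffAt ℝ 1 (curvatureGain ζ n h V) ze :=
    (hDG.clm_apply (contDiffAt_const.prodMk
      (((contDiffAt_const.mul hn1).sub hV1).div contDiffAt_fst hze))).div hα hα0
  have hW0ze : curvatureOffset ζ n h V ze = 0 := by
    simp [curvatureOffset, boundarySlope, hV0, Prod.mk_zero_zero]
  obtain ⟨K, s, hs, hK⟩ := hW0.exists_lipschitzOnWith
  refine ⟨K, |curvatureGain ζ n h V ze| + 1, K.coe_nonneg, ?_⟩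
  filter_upwards [hs, hW1.continuousAt.abs.eventually_lt continuousAt_const (lt_add_one _)]
    with z hzs hz
  refine ⟨?_, hz.le⟩
  simpa [hW0ze, Real.dist_eq] using hK.dist_le_mul z hzs ze (mem_of_mem_nhds hs)

theorem exists_boundary_curvature_bound {ze : ℝ × ℝ} (hnz : ζ * n ze.1 ≠ 0) (hze : ze.1 ≠ 0)
    (hn : ContDiffAt ℝ 2 n ze.1) (hh : ContDiffAt ℝ 3 h ze.1) (hV : ContDiffAt ℝ 2 V ze)
    (hV0 : V ze = 0) :
    ∃ K M : ℝ, 0 ≤ K ∧ ∃ U ∈ 𝓝 ze, ∀ (F : ℝ × ℝ → ℝ) (l : ℝ → ℝ) (t : ℝ), 0 ≤ t →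
      ContDiff ℝ 2 F →
      (∀ᶠ s in 𝓝[Ici 0] t, (l s, F (s, 1)) ∈ U ∧ F (s, 0) = h (l s)
        ∧ HasDerivAt l (V (l s, F (s, 1))) s
        ∧ partialFst F (s, 0) + ζ * n (l s) / l s * partialSnd F (s, 0) = 0) →
      (∀ x ∈ Icc (0:ℝ) 1, partialFst F (t, x)
        + (ζ * n (l t) / l t + -V (l t, F (t, 1)) / l t * x) * partialSnd F (t, x) = 0) →
      |partialSnd (partialSnd F) (t, 0)|
        ≤ K * dist (l t, F (t, 1)) ze + M * |partialSnd F (t, 1)| := by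
  obtain ⟨K, M, hK, hbound⟩ := exists_curvature_bounds hnz hze hn hh hV hV0
  have hG : ∀ᶠ z in 𝓝 ze, DifferentiableAt ℝ (boundarySlope ζ n h V) z :=
    ((ContDiffAt.boundarySlope hn hh hV hnz).eventually (by simp)).mono
      fun z hz => hz.differentiableAt (by norm_num)
  have hh' : ∀ᶠ z : ℝ × ℝ in 𝓝 ze, DifferentiableAt ℝ h z.1 :=
    continuousAt_fst.eventually ((hh.eventually (by simp)).mono
      fun x hx => hx.differentiableAt (by norm_num))
  have hnz' : ∀ᶠ z : ℝ × ℝ in 𝓝 ze, ζ * n z.1 ≠ 0 :=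
    (continuousAt_const.mul (hn.continuousAt.comp continuousAt_fst)).eventually_ne hnz
  have hze' : ∀ᶠ z : ℝ × ℝ in 𝓝 ze, z.1 ≠ 0 := continuousAt_fst.eventually_ne hze
  refine ⟨K, M, hK, _, hbound.and (hG.and (hh'.and (hnz'.and hze'))), ?_⟩
  intro F l t ht hF hsol hpde
  have hslope : (fun σ => partialSnd F (σ, 0)) =ᶠ[𝓝[Ici 0] t]
      fun σ => boundarySlope ζ n h V (l σ, F (σ, 1)) := by
    filter_upwards [eventually_eventually_nhdsWithin.2 hsol, hsol, self_mem_nhdsWithin]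
      with s hsol' hsols hs
    obtain ⟨⟨-, -, hhs, hns, hls⟩, -, hls', hpde0⟩ := hsols
    exact partialSnd_zero_eq_boundarySlope hs (hF.differentiable (by norm_num) _) hhs hls'
      (hsol'.mono fun σ hσ => hσ.2.1) hpde0 hns hls
  obtain ⟨⟨⟨hW0, hW1⟩, hGt, -, hnt, hlt⟩, -, hl, -⟩ := hsol.self_of_nhdsWithin ht
  rw [partialSnd_partialSnd_zero_eq ht hF hl hGt hslope hpde hnt hlt]
  calc _ ≤ |curvatureOffset ζ n h V (l t, F (t, 1))|
        + |curvatureGain ζ n h V (l t, F (t, 1))| * |partialSnd F (t, 1)| := by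
        rw [← abs_mul]; exact abs_add_le _ _
    _ ≤ _ := by gcongr

end BoundaryCurvature

theorem contDiffAt_qfun {η ρ0 Veff L B Kd l : ℝ} {m : WithTop ℕ∞}
    (hden : B * ρ0 + Kd * (L - l) ≠ 0) : ContDiffAt ℝ m (qfun η ρ0 Veff L B Kd) l := by
  unfold qfun
  fun_prop (disch := exact hden)

-- The feedback law `N = Ne + k1 (N q(l) - Ne q(le))`, solved for `N`.
noncomputable def closedLoopSpeed (q : ℝ → ℝ) (k1 Ne le l : ℝ) : ℝ :=
  Ne * (1 - k1 * q le) / (1 - k1 * q l)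

noncomputable def inletFraction (q : ℝ → ℝ) (ρ0 Veff k1 k2 Ne fpe le l : ℝ) : ℝ :=
  (ρ0 * Veff * Ne * fpe + k2 * (closedLoopSpeed q k1 Ne le l * q l - Ne * q le))
    / (ρ0 * Veff * closedLoopSpeed q k1 Ne le l)

noncomputable def interfaceSpeed (q : ℝ → ℝ) (η Kd ρ0 Veff Seff k1 Ne le : ℝ) (z : ℝ × ℝ) : ℝ :=
  ((Kd / η) * (closedLoopSpeed q k1 Ne le z.1 * q z.1)
    - ρ0 * Veff * closedLoopSpeed q k1 Ne le z.1 * z.2) / (ρ0 * Seff * (1 - z.2))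

section ClosedLoopCoefficients

variable {q : ℝ → ℝ} {η Kd ρ0 Veff Seff k1 k2 Ne fpe le : ℝ} {m : WithTop ℕ∞}

theorem closedLoopSpeed_self (hden : 1 - k1 * q le ≠ 0) : closedLoopSpeed q k1 Ne le le = Ne := by
  rw [closedLoopSpeed, mul_div_assoc, div_self hden, mul_one]

theorem contDiffAt_closedLoopSpeed {l : ℝ} (hq : ContDiffAt ℝ m q l) (hden : 1 - k1 * q l ≠ 0) :
    ContDiffAt ℝ m (closedLoopSpeed q k1 Ne le) l :=
  contDiffAt_const.div (contDiffAt_const.sub (contDiffAt_const.mul hq)) hden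

theorem contDiffAt_inletFraction (hq : ContDiffAt ℝ m q le) (hden : 1 - k1 * q le ≠ 0)
    (hρV : ρ0 * Veff ≠ 0) (hNe : Ne ≠ 0) :
    ContDiffAt ℝ m (inletFraction q ρ0 Veff k1 k2 Ne fpe le) le := by
  have hn : ContDiffAt ℝ m (closedLoopSpeed q k1 Ne le) le := contDiffAt_closedLoopSpeed hq hden
  refine (contDiffAt_const.add (contDiffAt_const.mul ((hn.mul hq).sub contDiffAt_const))).div
    (contDiffAt_const.mul hn) ?_
  rw [closedLoopSpeed_self hden]
  exact mul_ne_zero hρV hNe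

theorem contDiffAt_interfaceSpeed (hq : ContDiffAt ℝ m q le) (hden : 1 - k1 * q le ≠ 0)
    (hρS : ρ0 * Seff ≠ 0) (hfpe : fpe ≠ 1) :
    ContDiffAt ℝ m (interfaceSpeed q η Kd ρ0 Veff Seff k1 Ne le) (le, fpe) := by
  have hn : ContDiffAt ℝ m (fun z : ℝ × ℝ => closedLoopSpeed q k1 Ne le z.1) (le, fpe) :=
    ContDiffAt.comp (g := closedLoopSpeed q k1 Ne le) _ (contDiffAt_closedLoopSpeed hq hden)
      contDiffAt_fst
  have hq' : ContDiffAt ℝ m (fun z : ℝ × ℝ => q z.1) (le, fpe) := hq.comp _ contDiffAt_fst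
  exact ((contDiffAt_const.mul (hn.mul hq')).sub ((contDiffAt_const.mul hn).mul contDiffAt_snd)).div
    (contDiffAt_const.mul (contDiffAt_const.sub contDiffAt_snd))
    (mul_ne_zero hρS (sub_ne_zero.2 hfpe.symm))

theorem interfaceSpeed_equilibrium_eq_zero (hden : 1 - k1 * q le ≠ 0)
    (heq : (Kd / η) * Ne * q le = ρ0 * Veff * Ne * fpe) :
    interfaceSpeed q η Kd ρ0 Veff Seff k1 Ne le (le, fpe) = 0 := by
  rw [interfaceSpeed, closedLoopSpeed_self hden, div_eq_zero_iff]
  left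
  linear_combination heq

end ClosedLoopCoefficients

structure IsClosedLoopSolution (q : ℝ → ℝ) (η Kd ρ0 Veff Seff ζ k1 k2 Ne fpe le : ℝ)
    (l : ℝ → ℝ) (f : ℝ → ℝ → ℝ) (N Fi ΔP : ℝ → ℝ) : Prop where
  contDiff : ContDiff ℝ 3 (Function.uncurry f)
  pressure : ∀ t, 0 ≤ t → ΔP t = N t * q (l t)
  speed : ∀ t, 0 ≤ t → N t = Ne + k1 * (ΔP t - Ne * q le)
  inflow : ∀ t, 0 ≤ t → Fi t = ρ0 * Veff * Ne * fpe + k2 * (ΔP t - Ne * q le)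
  hasDerivAt_interface : ∀ t, 0 ≤ t →
    HasDerivAt l (((Kd / η) * ΔP t - ρ0 * Veff * N t * f t 1) / (ρ0 * Seff * (1 - f t 1))) t
  transport : ∀ t, 0 ≤ t → ∀ x ∈ Icc (0:ℝ) 1,
    deriv (fun s => f s x) t + ((ζ * N t - x * deriv l t) / l t) * deriv (f t) x = 0
  boundary : ∀ t, 0 ≤ t → f t 0 = Fi t / (ρ0 * Veff * N t)

namespace IsClosedLoopSolution

variable {q : ℝ → ℝ} {η Kd ρ0 Veff Seff ζ k1 k2 Ne fpe le : ℝ} {l : ℝ → ℝ} {f : ℝ → ℝ → ℝ}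
  {N Fi ΔP : ℝ → ℝ}

theorem reduce (hsol : IsClosedLoopSolution q η Kd ρ0 Veff Seff ζ k1 k2 Ne fpe le l f N Fi ΔP)
    {s : ℝ} (hs : 0 ≤ s) (hden : 1 - k1 * q (l s) ≠ 0) :
    N s = closedLoopSpeed q k1 Ne le (l s)
      ∧ f s 0 = inletFraction q ρ0 Veff k1 k2 Ne fpe le (l s)
      ∧ HasDerivAt l (interfaceSpeed q η Kd ρ0 Veff Seff k1 Ne le (l s, f s 1)) s := by
  have hΔP := hsol.pressure s hs
  have hN : N s = closedLoopSpeed q k1 Ne le (l s) := by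
    rw [closedLoopSpeed, eq_div_iff hden]
    linear_combination hsol.speed s hs + k1 * hΔP
  rw [hN] at hΔP
  refine ⟨hN, ?_, ?_⟩
  · rw [hsol.boundary s hs, hsol.inflow s hs, hΔP, hN, inletFraction]
  · simpa only [interfaceSpeed, hΔP, hN] using hsol.hasDerivAt_interface s hs

theorem transport_uncurry
    (hsol : IsClosedLoopSolution q η Kd ρ0 Veff Seff ζ k1 k2 Ne fpe le l f N Fi ΔP)
    {t : ℝ} (ht : 0 ≤ t) : ∀ x ∈ Icc (0:ℝ) 1, partialFst (Function.uncurry f) (t, x)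
      + (ζ * N t / l t + -deriv l t / l t * x) * partialSnd (Function.uncurry f) (t, x) = 0 := by
  intro x hx
  have hf := hsol.contDiff.differentiable (by norm_num) (t, x)
  rw [partialFst_uncurry hf, partialSnd_uncurry hf]
  linear_combination hsol.transport t ht x hx

end IsClosedLoopSolution

theorem exists_closedLoop_boundary_bound {q : ℝ → ℝ} {η Kd ρ0 Veff Seff ζ k1 k2 Ne fpe le : ℝ}
    (hq : ContDiffAt ℝ 3 q le) (hden : 1 - k1 * q le ≠ 0) (hρV : ρ0 * Veff ≠ 0)
    (hρS : ρ0 * Seff ≠ 0) (hζ : ζ ≠ 0) (hNe : Ne ≠ 0) (hle : le ≠ 0) (hfpe : fpe ≠ 1)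
    (heq : (Kd / η) * Ne * q le = ρ0 * Veff * Ne * fpe) {ε : ℝ} (hε : 0 < ε) :
    ∃ K M r : ℝ, 0 ≤ K ∧ 0 < r ∧ ∀ l f N Fi ΔP,
      IsClosedLoopSolution q η Kd ρ0 Veff Seff ζ k1 k2 Ne fpe le l f N Fi ΔP →
      ∀ t, 0 ≤ t → dist (l t, f t 1) (le, fpe) < r →
        |deriv l t| ≤ ε ∧ |partialSnd (partialSnd (Function.uncurry f)) (t, 0)|
          ≤ K * dist (l t, f t 1) (le, fpe) + M * |partialSnd (Function.uncurry f) (t, 1)| := by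
  set V := interfaceSpeed q η Kd ρ0 Veff Seff k1 Ne le
  have hV : ContDiffAt ℝ 3 V (le, fpe) := contDiffAt_interfaceSpeed hq hden hρS hfpe
  have hV0 : V (le, fpe) = 0 := interfaceSpeed_equilibrium_eq_zero hden heq
  obtain ⟨K, M, hK, U, hU, hbound⟩ := exists_boundary_curvature_bound (ζ := ζ)
    (n := closedLoopSpeed q k1 Ne le) (ze := (le, fpe))
    (by rw [closedLoopSpeed_self hden]; exact mul_ne_zero hζ hNe) hle
    ((contDiffAt_closedLoopSpeed hq hden).of_le (by norm_num))
    (contDiffAt_inletFraction hq hden hρV hNe) (hV.of_le (by norm_num)) hV0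
  have hden' : ∀ᶠ z : ℝ × ℝ in 𝓝 (le, fpe), 1 - k1 * q z.1 ≠ 0 :=
    (continuousAt_const.sub (continuousAt_const.mul
      (hq.continuousAt.comp continuousAt_fst))).eventually_ne hden
  have hVsmall : ∀ᶠ z in 𝓝 (le, fpe), |V z| < ε :=
    hV.continuousAt.abs.eventually_lt continuousAt_const (by simpa [hV0] using hε)
  obtain ⟨r, hr, hball⟩ := Metric.mem_nhds_iff.1 (inter_mem hU (hden'.and hVsmall))
  refine ⟨K, M, r, hK, hr, ?_⟩
  intro l f N Fi ΔP hsol t ht hclose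
  have hreduce : ∀ s, 0 ≤ s → (l s, f s 1) ∈ Metric.ball (le, fpe) r →
      N s = closedLoopSpeed q k1 Ne le (l s) ∧ f s 0 = inletFraction q ρ0 Veff k1 k2 Ne fpe le (l s)
        ∧ HasDerivAt l (V (l s, f s 1)) s :=
    fun s hs hsr => hsol.reduce hs (hball hsr).2.1
  have hφ : ContinuousAt (fun s => (l s, f s 1)) t :=
    (hsol.hasDerivAt_interface t ht).continuousAt.prodMk
      (hsol.contDiff.continuous.comp (Continuous.prodMk_left 1)).continuousAt
  have hnear : ∀ᶠ s in 𝓝[Ici 0] t, 0 ≤ s ∧ (l s, f s 1) ∈ Metric.ball (le, fpe) r :=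
    eventually_mem_nhdsWithin.and
      (mem_nhdsWithin_of_mem_nhds (hφ.preimage_mem_nhds (Metric.isOpen_ball.mem_nhds hclose)))
  obtain ⟨hNt, -, hlt⟩ := hreduce t ht hclose
  refine ⟨hlt.deriv ▸ (hball hclose).2.2.le, ?_⟩
  refine hbound _ l t ht (hsol.contDiff.of_le (by norm_num)) ?_ fun x hx => ?_
  · filter_upwards [hnear] with s ⟨hs, hsr⟩
    obtain ⟨hNs, hfs, hls⟩ := hreduce s hs hsr
    refine ⟨(hball hsr).1, hfs, hls, ?_⟩
    have := hsol.transport_uncurry hs 0 (left_mem_Icc.2 zero_le_one)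
    rwa [hNs, mul_zero, add_zero] at this
  · have := hsol.transport_uncurry ht x hx
    rwa [hNt, hlt.deriv] at this

theorem transport_speed_bounds {ζ Ne le N l D : ℝ} (hζ : 0 < ζ) (hNe : 0 < Ne) (hle : 0 < le)
    (hl : |l - le| ≤ le / 2) (hN : |N - Ne| ≤ Ne / 2) (hD : |D| ≤ ζ * Ne / 40) :
    ζ * Ne / (6 * le) ≤ ζ * N / l + -D / l
      ∧ ζ * N / l ≤ 3 * ζ * Ne / le
      ∧ ∀ x ∈ Icc (0:ℝ) 1, ζ * Ne / (6 * le) ≤ 1 * (ζ * N / l + -D / l * x) + 3 * (-D / l) := by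
  obtain ⟨hl₁, hl₂⟩ := abs_le.1 hl
  obtain ⟨hN₁, hN₂⟩ := abs_le.1 hN
  obtain ⟨hD₁, hD₂⟩ := abs_le.1 hD
  have hl0 : 0 < l := by linarith
  have hP : 0 < ζ * Ne := mul_pos hζ hNe
  have hζN : ζ * Ne / 2 ≤ ζ * N ∧ ζ * N ≤ 3 * (ζ * Ne) / 2 := by
    constructor <;> nlinarith
  have key : ∀ c, 1 ≤ c → c ≤ 4 → ζ * Ne / (6 * le) ≤ (ζ * N - c * D) / l := by
    intro c hc₁ hc₄
    rw [div_le_div_iff₀ (by positivity) hl0]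
    have hcD : c * D ≤ ζ * Ne / 10 := by
      nlinarith [mul_le_mul_of_nonneg_left hD₂ (by linarith : (0:ℝ) ≤ c)]
    nlinarith [mul_le_mul_of_nonneg_left hl₂ hP.le,
      mul_le_mul_of_nonneg_right (by linarith : 2 * (ζ * Ne) / 5 ≤ ζ * N - c * D) hle.le]
  refine ⟨?_, ?_, fun x hx => ?_⟩
  · convert key 1 le_rfl (by norm_num) using 1
    ring
  · rw [div_le_div_iff₀ hl0 hle]
    nlinarith
  · convert key (x + 3) (by linarith [hx.1]) (by linarith [hx.2]) using 1
    ring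

theorem sq_le_of_abs_le {w K M x y z : ℝ} (h : |w| ≤ K * (|x| + |y|) + M * |z|) :
    w ^ 2 ≤ 3 * (K ^ 2 + M ^ 2) * (x ^ 2 + y ^ 2 + z ^ 2) := by
  have hw : w ^ 2 ≤ (K * |x| + K * |y| + M * |z|) ^ 2 := by
    rw [← sq_abs w]
    exact pow_le_pow_left₀ (abs_nonneg w) (by linarith) 2
  nlinarith [sq_nonneg (K * |x| - K * |y|), sq_nonneg (K * |x| - M * |z|),
    sq_nonneg (K * |y| - M * |z|), sq_abs x, sq_abs y, sq_abs z,
    mul_nonneg (sq_nonneg M) (sq_nonneg x), mul_nonneg (sq_nonneg M) (sq_nonneg y),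
    mul_nonneg (sq_nonneg K) (sq_nonneg z)]

theorem lyapunov_V3_decay_general
    (L B Kd ζ η ρ0 Seff Veff : ℝ)
    (hB : 0 < B) (hKd : 0 < Kd) (hζ : 0 < ζ)
    (hρ0 : 0 < ρ0) (hSeff : 0 < Seff) (hVeff : 0 < Veff)
    (le fpe Ne : ℝ)
    (hle : le ∈ Set.Ioo 0 L) (hfpe : fpe ∈ Set.Ioo (0:ℝ) 1) (hNe : 0 < Ne)
    (heq : (Kd / η) * Ne * qfun η ρ0 Veff L B Kd le = ρ0 * Veff * Ne * fpe)
    (k1 k2 : ℝ)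
    (hden : 1 - k1 * qfun η ρ0 Veff L B Kd le ≠ 0) :
    ∃ γ3 > (0:ℝ), ∃ β3 > (0:ℝ), ∃ δ3 > (0:ℝ), ∃ θ3 > (0:ℝ), ∃ δ > (0:ℝ),
      ∀ (l : ℝ → ℝ) (f : ℝ → ℝ → ℝ) (N Fi ΔP : ℝ → ℝ),
        -- regularity: l is C¹ and f is C³
        ContDiff ℝ 1 l →
        ContDiff ℝ 3 (Function.uncurry f) →
        -- state constraints
        (∀ t, 0 ≤ t → l t ∈ Set.Ioo 0 L) →
        (∀ t, 0 ≤ t → ∀ x ∈ Set.Icc (0:ℝ) 1, f t x < 1) →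
        -- die pressure difference and feedback controls
        (∀ t, 0 ≤ t → ΔP t = N t * qfun η ρ0 Veff L B Kd (l t)) →
        (∀ t, 0 ≤ t → N t = Ne + k1 * (ΔP t - Ne * qfun η ρ0 Veff L B Kd le)) →
        (∀ t, 0 ≤ t → 0 < N t) →
        (∀ t, 0 ≤ t →
          Fi t = ρ0 * Veff * Ne * fpe + k2 * (ΔP t - Ne * qfun η ρ0 Veff L B Kd le)) →
        -- interface dynamics
        (∀ t, 0 ≤ t → HasDerivAt l
          (((Kd / η) * ΔP t - ρ0 * Veff * N t * f t 1) / (ρ0 * Seff * (1 - f t 1))) t) →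
        -- transport equation with normalized speed α(t,x) = (ζ·N(t) − x·l'(t))/l(t)
        (∀ t, 0 ≤ t → ∀ x ∈ Set.Icc (0:ℝ) 1,
          deriv (fun s => f s x) t
            + ((ζ * N t - x * deriv l t) / l t) * deriv (f t) x = 0) →
        -- boundary condition
        (∀ t, 0 ≤ t → f t 0 = Fi t / (ρ0 * Veff * N t)) →
        ∀ t, 0 ≤ t →
          |l t - le| + |N t - Ne| + |f t 1 - fpe| ≤ δ →
          ∃ v : ℝ,
            HasDerivAt
              (fun s => ∫ x in (0:ℝ)..1,
                Real.exp (-γ3 * x) * (iteratedDeriv 2 (f s) x) ^ 2) v t ∧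
            v ≤ -β3 * (∫ x in (0:ℝ)..1, Real.exp (-γ3 * x) * (iteratedDeriv 2 (f t) x) ^ 2)
              - δ3 * (iteratedDeriv 2 (f t) 1) ^ 2
              + θ3 * ((l t - le) ^ 2 + (f t 1 - fpe) ^ 2 + (deriv (f t) 1) ^ 2) := by
  obtain ⟨hle0, hleL⟩ := hle
  have hq : ContDiffAt ℝ 3 (qfun η ρ0 Veff L B Kd) le :=
    contDiffAt_qfun (by have := sub_pos.2 hleL; positivity)
  obtain ⟨K, M, r, hK, hr, hbound⟩ := exists_closedLoop_boundary_bound (k2 := k2) hq hden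
    (mul_pos hρ0 hVeff).ne' (mul_pos hρ0 hSeff).ne' hζ.ne' hNe.ne' hle0.ne' hfpe.2.ne heq
    (ε := ζ * Ne / 40) (by positivity)
  refine ⟨1, one_pos, ζ * Ne / (6 * le), by positivity, ζ * Ne / (6 * le) * exp (-1),
    by positivity, 3 * (3 * ζ * Ne / le) * (K ^ 2 + M ^ 2) + 1, by positivity,
    min r (min le Ne) / 2, by positivity, ?_⟩
  intro l f N Fi ΔP _ hf _ _ hΔP hN _ hFi hl hpde hbc t ht hclose
  have hsol : IsClosedLoopSolution (qfun η ρ0 Veff L B Kd) η Kd ρ0 Veff Seff ζ k1 k2 Ne fpe le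
      l f N Fi ΔP := ⟨hf, hΔP, hN, hFi, hl, hpde, hbc⟩
  have hδ := min_le_left r (min le Ne)
  have hδ' := min_le_right r (min le Ne)
  have hdl : |l t - le| ≤ le / 2 := by
    linarith [abs_nonneg (N t - Ne), abs_nonneg (f t 1 - fpe), min_le_left le Ne]
  have hdN : |N t - Ne| ≤ Ne / 2 := by
    linarith [abs_nonneg (l t - le), abs_nonneg (f t 1 - fpe), min_le_right le Ne]
  have hdist : dist (l t, f t 1) (le, fpe) ≤ |l t - le| + |f t 1 - fpe| := by
    rw [Prod.dist_eq, Real.dist_eq, Real.dist_eq]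
    exact max_le (by linarith [abs_nonneg (f t 1 - fpe)]) (by linarith [abs_nonneg (l t - le)])
  obtain ⟨hl't, hw0⟩ := hbound l f N Fi ΔP hsol t ht (by linarith [abs_nonneg (N t - Ne)])
  obtain ⟨hc, hA, hβ⟩ := transport_speed_bounds hζ hNe hle0 hdl hdN hl't
  obtain ⟨v, hv, hvle⟩ := exists_hasDerivAt_weightedEnergy_le (γ := 1) hf
    (hsol.transport_uncurry ht) hc hA hβ
  simp only [partialSnd_partialSnd_uncurry (hf.of_le (by norm_num))] at hv hvle hw0
  rw [partialSnd_uncurry (hf.differentiable (by norm_num) _)] at hw0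
  refine ⟨v, hv, hvle.trans ?_⟩
  have hw0sq := sq_le_of_abs_le (hw0.trans (by gcongr))
  have hS : 0 ≤ (l t - le) ^ 2 + (f t 1 - fpe) ^ 2 + deriv (f t) 1 ^ 2 := by positivity
  have hA0 : 0 ≤ 3 * ζ * Ne / le := by positivity
  nlinarith [mul_le_mul_of_nonneg_left hw0sq hA0]

/-- Lemma 3 of the paper: if `1 − k1·b2 ≠ 0` with `b2 = q(le)`, there are
positive constants `γ3, β3, δ3, θ3, δ` such that along every classical solution of the
closed-loop extrusion model with `f` of class `C³`, at each time `t ≥ 0` where the solution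
is `δ`-close to the equilibrium, `V3(t) = ∫₀¹ e^{−γ3 x}(∂ₓ²f(t,x))² dx` is differentiable
with `V3'(t) ≤ −β3·V3(t) − δ3·(∂ₓ²f(t,1))²
+ θ3·((l(t) − le)² + (f(t,1) − fpe)² + (∂ₓf(t,1))²)`. -/
theorem lyapunov_V3_decay
    (L B Kd ζ η ρ0 Seff Veff : ℝ)
    (hL : 0 < L) (hB : 0 < B) (hKd : 0 < Kd) (hζ : 0 < ζ) (hη : 0 < η)
    (hρ0 : 0 < ρ0) (hSeff : 0 < Seff) (hVeff : 0 < Veff)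
    (le fpe Ne : ℝ)
    (hle : le ∈ Set.Ioo 0 L) (hfpe : fpe ∈ Set.Ioo (0:ℝ) 1) (hNe : 0 < Ne)
    (heq : (Kd / η) * Ne * qfun η ρ0 Veff L B Kd le = ρ0 * Veff * Ne * fpe)
    (k1 k2 : ℝ)
    (hden : 1 - k1 * qfun η ρ0 Veff L B Kd le ≠ 0) :
    ∃ γ3 > (0:ℝ), ∃ β3 > (0:ℝ), ∃ δ3 > (0:ℝ), ∃ θ3 > (0:ℝ), ∃ δ > (0:ℝ),
      ∀ (l : ℝ → ℝ) (f : ℝ → ℝ → ℝ) (N Fi ΔP : ℝ → ℝ),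
        -- regularity: l is C¹ and f is C³
        ContDiff ℝ 1 l →
        ContDiff ℝ 3 (Function.uncurry f) →
        -- state constraints
        (∀ t, 0 ≤ t → l t ∈ Set.Ioo 0 L) →
        (∀ t, 0 ≤ t → ∀ x ∈ Set.Icc (0:ℝ) 1, f t x < 1) →
        -- die pressure difference and feedback controls
        (∀ t, 0 ≤ t → ΔP t = N t * qfun η ρ0 Veff L B Kd (l t)) →
        (∀ t, 0 ≤ t → N t = Ne + k1 * (ΔP t - Ne * qfun η ρ0 Veff L B Kd le)) →
        (∀ t, 0 ≤ t → 0 < N t) →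
        (∀ t, 0 ≤ t →
          Fi t = ρ0 * Veff * Ne * fpe + k2 * (ΔP t - Ne * qfun η ρ0 Veff L B Kd le)) →
        -- interface dynamics
        (∀ t, 0 ≤ t → HasDerivAt l
          (((Kd / η) * ΔP t - ρ0 * Veff * N t * f t 1) / (ρ0 * Seff * (1 - f t 1))) t) →
        -- transport equation with normalized speed α(t,x) = (ζ·N(t) − x·l'(t))/l(t)
        (∀ t, 0 ≤ t → ∀ x ∈ Set.Icc (0:ℝ) 1,
          deriv (fun s => f s x) t
            + ((ζ * N t - x * deriv l t) / l t) * deriv (f t) x = 0) →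
        -- boundary condition
        (∀ t, 0 ≤ t → f t 0 = Fi t / (ρ0 * Veff * N t)) →
        ∀ t, 0 ≤ t →
          |l t - le| + |N t - Ne| + |f t 1 - fpe| ≤ δ →
          ∃ v : ℝ,
            HasDerivAt
              (fun s => ∫ x in (0:ℝ)..1,
                Real.exp (-γ3 * x) * (iteratedDeriv 2 (f s) x) ^ 2) v t ∧
            v ≤ -β3 * (∫ x in (0:ℝ)..1, Real.exp (-γ3 * x) * (iteratedDeriv 2 (f t) x) ^ 2)
              - δ3 * (iteratedDeriv 2 (f t) 1) ^ 2
              + θ3 * ((l t - le) ^ 2 + (f t 1 - fpe) ^ 2 + (deriv (f t) 1) ^ 2) :=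
  lyapunov_V3_decay_general L B Kd ζ η ρ0 Seff Veff hB hKd hζ hρ0 hSeff hVeff le fpe Ne hle hfpe hNe
    heq k1 k2 hden
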